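/- Let m ≥ 2 be an integer, p > 2, and let K ⊂ ℝ² be a compact set with |S(K)| = 0. Let f = {f^{(j)}}_{|j|≤m−1} be a jet of order m−1 on K with f^{(j)} = 0 for all 1 ≤ |j| ≤ m−1 and ‖M^{(m)}f‖_{L^p(ℝ²)} < ∞. For each ε > 0 choose finitely many disjoint open intervals covering f^{(0)}(K) with total length less than ε, let A_ε be their union, and define η_ε(t) := ∫_0^t 1_{A_ε}(s) ds. Define the jet f_ε by f_ε^{(0)} := η_ε ∘ f^{(0)} and f_ε^{(j)} := 0 for 1 ≤ |j| ≤ m−1. Then ‖M^{(m)}f_ε‖_{L^p(ℝ²)} ≤ δ(ε) for some function δ with δ(ε) → 0 as ε → 0⁺. -/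

import Mathlib

open MeasureTheory Filter Topology Metric Set
open scoped ENNReal NNReal Classical

noncomputable section

namespace DFA

abbrev Euc (n : ℕ) := EuclideanSpace ℝ (Fin n)
abbrev E2 := EuclideanSpace ℝ (Fin 2)

/-- The set `S(E)` of points of `E` that are limits of sequences of points of `E` lying in
connected components of `E` different from that of the limit point. -/
def singSet (E : Set E2) : Set E2 :=
  {x | x ∈ E ∧ ∃ xk : ℕ → E2, (∀ k, xk k ∈ E) ∧ Tendsto xk atTop (𝓝 x) ∧
    ∀ k, connectedComponentIn E (xk k) ≠ connectedComponentIn E x}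

/-- The finite set of multi-indices of order at most `m`. -/
def mIdx (n m : ℕ) : Finset (Fin n → ℕ) :=
  (Finset.Icc 0 (fun _ => m)).filter (fun j => (∑ i, j i) ≤ m)

/-- The `m`-th order Taylor polynomial of the jet `f` centred at `y`, evaluated at `x`. -/
def taylorPoly {n : ℕ} (m : ℕ) (f : (Fin n → ℕ) → Euc n → ℝ) (y x : Euc n) : ℝ :=
  ∑ j ∈ mIdx n m, (((∏ i, (j i).factorial : ℕ)) : ℝ)⁻¹ * f j y * ∏ i, (x i - y i) ^ j i

/-- The Taylor remainder `R_j f(x,y)` of order `m` of the jet `f`. -/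
def jetRem {n : ℕ} (m : ℕ) (f : (Fin n → ℕ) → Euc n → ℝ) (j : Fin n → ℕ)
    (x y : Euc n) : ℝ :=
  f j x - ∑ l ∈ (mIdx n m).filter (fun l => (∑ i, (j i + l i)) ≤ m),
    (((∏ i, (l i).factorial : ℕ)) : ℝ)⁻¹ * f (fun i => j i + l i) y * ∏ i, (x i - y i) ^ l i

/-- Shvartsman's maximal function `M^{(m)} f` of a jet of order `m-1` on `K`. -/
def shvMax {n : ℕ} (m : ℕ) (K : Set (Euc n)) (f : (Fin n → ℕ) → Euc n → ℝ)
    (x : Euc n) : ℝ≥0∞ :=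
  ⨆ (y : Euc n) (_ : y ∈ K) (z : Euc n) (_ : z ∈ K) (_ : y ≠ z),
    (‖taylorPoly (m - 1) f y x - taylorPoly (m - 1) f z x‖₊ : ℝ≥0∞) /
      (edist x y ^ (m : ℝ) + edist x z ^ (m : ℝ))

/-- The `L^p` norm of an `ℝ≥0∞`-valued function on `ℝⁿ`. -/
def lpNormE {n : ℕ} (g : Euc n → ℝ≥0∞) (p : ℝ) : ℝ≥0∞ :=
  (∫⁻ x, g x ^ p) ^ (1 / p)

/-- `A ⊆ ℝ` is the union of the finitely many pairwise disjoint open intervals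
`(a i, b i)`. -/
def IntervalFamily (N : ℕ) (a b : Fin N → ℝ) (A : Set ℝ) : Prop :=
  A = (⋃ i, Set.Ioo (a i) (b i)) ∧ (∀ i, a i < b i) ∧
    ∀ i i', i ≠ i' → Disjoint (Set.Ioo (a i) (b i)) (Set.Ioo (a i') (b i'))

/-- The monotone compression map `η_A(t) = ∫_0^t 1_A(s) ds`. -/
def etaComp (A : Set ℝ) (t : ℝ) : ℝ :=
  ∫ s in (0 : ℝ)..t, A.indicator (fun _ => (1 : ℝ)) s

/-!
Because the components of order `1, …, m-1` vanish on `K`, the Taylor polynomials are constants and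
`M^{(m)} f x = sup |f⁰ y - f⁰ z| / (|x - y|^m + |x - z|^m)`. Averaging `(M^{(m)} f)^p` over the
ball of radius `|y - z|` around `y` (Morrey's argument) makes `f⁰` Hölder of exponent `m - 2/p > 0`
on `K`; a continuous function with null image is constant on every connected component.

The map `η_ε` is `1`-Lipschitz and its oscillation is at most `|A_ε| < ε`, so
`M^{(m)} f_ε ≤ min (M^{(m)} f) (ε G)` with
`G x = sup {(|x - y|^m + |x - z|^m)⁻¹ : y, z ∈ K, f⁰ y ≠ f⁰ z}` (`jumpMax`).
Off `S(K)` the function `f⁰` is constant on `K` near `x`, so `G < ∞` almost everywhere and dominated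
convergence gives `‖min (M^{(m)} f) (ε G)‖_p → 0`. If `f⁰(K)` had positive measure there would be no
admissible covering at all for small `ε`.
-/

open scoped Interval

lemma edist_rpow_add_edist_rpow_ne_zero {X : Type*} [EMetricSpace X] (m : ℕ) {y z : X}
    (hyz : y ≠ z) (x : X) : edist x y ^ (m : ℝ) + edist x z ^ (m : ℝ) ≠ 0 := by
  intro h
  obtain ⟨hy, hz⟩ := add_eq_zero.mp h
  rw [ENNReal.rpow_natCast, pow_eq_zero_iff', edist_eq_zero] at hy hz
  exact hyz (hy.1.symm.trans hz.1)

lemma edist_rpow_add_edist_rpow_ne_top {X : Type*} [PseudoMetricSpace X] (m : ℕ) (x y z : X) :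
    edist x y ^ (m : ℝ) + edist x z ^ (m : ℝ) ≠ ⊤ := by
  simp [ENNReal.rpow_natCast, edist_ne_top]

section Jets

variable {n : ℕ}

def IsFlatOn (k : ℕ) (K : Set (Euc n)) (f : (Fin n → ℕ) → Euc n → ℝ) : Prop :=
  ∀ j : Fin n → ℕ, 1 ≤ ∑ i, j i → ∑ i, j i ≤ k → ∀ x ∈ K, f j x = 0

def scalarJet (u : Euc n → ℝ) : (Fin n → ℕ) → Euc n → ℝ := fun j x => if j = 0 then u x else 0

@[simp]
lemma scalarJet_zero (u : Euc n → ℝ) : scalarJet u 0 = u :=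
  funext fun _ => if_pos rfl

lemma isFlatOn_scalarJet (k : ℕ) (K : Set (Euc n)) (u : Euc n → ℝ) :
    IsFlatOn k K (scalarJet u) := by
  intro j hj _ x _
  refine if_neg ?_
  rintro rfl
  simp at hj

lemma taylorPoly_of_isFlatOn {k : ℕ} {K : Set (Euc n)} {f : (Fin n → ℕ) → Euc n → ℝ}
    (hf : IsFlatOn k K f) {y : Euc n} (hy : y ∈ K) (x : Euc n) :
    taylorPoly k f y x = f 0 y := by
  have h0 : (0 : Fin n → ℕ) ∈ mIdx n k := by simp [mIdx]
  rw [taylorPoly, Finset.sum_eq_single_of_mem 0 h0]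
  · simp
  · intro j hj hj0
    have hpos : 1 ≤ ∑ i, j i := by
      by_contra! h
      exact hj0 (funext fun i => Finset.sum_eq_zero_iff.mp (by omega) i (Finset.mem_univ i))
    rw [hf j hpos (Finset.mem_filter.mp hj).2 y hy, mul_zero, zero_mul]

lemma shvMax_le_iff {m : ℕ} {K : Set (Euc n)} {f : (Fin n → ℕ) → Euc n → ℝ} {x : Euc n}
    {c : ℝ≥0∞} :
    shvMax m K f x ≤ c ↔ ∀ y ∈ K, ∀ z ∈ K, y ≠ z →
      edist (taylorPoly (m - 1) f y x) (taylorPoly (m - 1) f z x) /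
        (edist x y ^ (m : ℝ) + edist x z ^ (m : ℝ)) ≤ c := by
  simp only [shvMax, iSup_le_iff, edist_nndist, nndist_eq_nnnorm]

lemma continuous_taylorPoly (m : ℕ) (f : (Fin n → ℕ) → Euc n → ℝ) (y : Euc n) :
    Continuous (taylorPoly m f y) := by
  unfold taylorPoly
  fun_prop

lemma lowerSemicontinuous_shvMax (m : ℕ) (K : Set (Euc n)) (f : (Fin n → ℕ) → Euc n → ℝ) :
    LowerSemicontinuous (shvMax m K f) := by
  refine lowerSemicontinuous_iSup fun y => lowerSemicontinuous_iSup fun _ =>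
    lowerSemicontinuous_iSup fun z => lowerSemicontinuous_iSup fun _ =>
    lowerSemicontinuous_iSup fun hyz => Continuous.lowerSemicontinuous ?_
  have hy := continuous_taylorPoly (m - 1) f y
  have hz := continuous_taylorPoly (m - 1) f z
  have hnum : Continuous fun x =>
      (‖taylorPoly (m - 1) f y x - taylorPoly (m - 1) f z x‖₊ : ℝ≥0∞) := by fun_prop
  have hden : Continuous fun x : Euc n => edist x y ^ (m : ℝ) + edist x z ^ (m : ℝ) := by
    fun_prop
  exact continuous_iff_continuousAt.2 fun x => ENNReal.Tendsto.div (hnum.tendsto x)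
    (Or.inr (edist_rpow_add_edist_rpow_ne_zero m hyz x)) (hden.tendsto x)
    (Or.inl (edist_rpow_add_edist_rpow_ne_top m x y z))

lemma shvMax_le_iff_of_isFlatOn {m : ℕ} {K : Set (Euc n)} {f : (Fin n → ℕ) → Euc n → ℝ}
    (hf : IsFlatOn (m - 1) K f) {x : Euc n} {c : ℝ≥0∞} :
    shvMax m K f x ≤ c ↔ ∀ y ∈ K, ∀ z ∈ K, y ≠ z →
      edist (f 0 y) (f 0 z) / (edist x y ^ (m : ℝ) + edist x z ^ (m : ℝ)) ≤ c := by
  rw [shvMax_le_iff]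
  refine forall₂_congr fun y hy => forall₂_congr fun z hz => ?_
  rw [taylorPoly_of_isFlatOn hf hy, taylorPoly_of_isFlatOn hf hz]

lemma edist_le_shvMax_mul {m : ℕ} {K : Set (Euc n)} {f : (Fin n → ℕ) → Euc n → ℝ}
    (hf : IsFlatOn (m - 1) K f) {y z : Euc n} (hy : y ∈ K) (hz : z ∈ K) (x : Euc n) :
    edist (f 0 y) (f 0 z) ≤ shvMax m K f x * (edist x y ^ (m : ℝ) + edist x z ^ (m : ℝ)) := by
  rcases eq_or_ne y z with rfl | hyz
  · simp
  rw [← ENNReal.div_le_iff (edist_rpow_add_edist_rpow_ne_zero m hyz x)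
    (edist_rpow_add_edist_rpow_ne_top m x y z)]
  exact (shvMax_le_iff_of_isFlatOn hf).1 le_rfl y hy z hz hyz

end Jets

section Compression

variable {A : Set ℝ}

lemma intervalIntegrable_indicator_one (hA : MeasurableSet A) (s t : ℝ) :
    IntervalIntegrable (A.indicator fun _ => (1 : ℝ)) volume s t :=
  (intervalIntegrable_const (c := (1 : ℝ))).mono_fun
    (measurable_const.indicator hA).aestronglyMeasurable
    (Eventually.of_forall fun u => by by_cases hu : u ∈ A <;> simp [hu])

lemma edist_etaComp_le (hA : MeasurableSet A) (s t : ℝ) :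
    edist (etaComp A s) (etaComp A t) ≤ volume (Ι s t ∩ A) := by
  have hsub : etaComp A t - etaComp A s = ∫ u in s..t, A.indicator (fun _ => (1 : ℝ)) u :=
    intervalIntegral.integral_interval_sub_left (intervalIntegrable_indicator_one hA 0 t)
      (intervalIntegrable_indicator_one hA 0 s)
  have hint : ∫ u in Ι s t, A.indicator (fun _ => (1 : ℝ)) u = volume.real (Ι s t ∩ A) := by
    rw [integral_indicator_const _ hA, smul_eq_mul, mul_one, measureReal_restrict_apply hA,
      Set.inter_comm]
  rw [edist_dist, Real.dist_eq, abs_sub_comm, hsub,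
    intervalIntegral.abs_integral_eq_abs_integral_uIoc, hint, abs_of_nonneg measureReal_nonneg]
  exact ENNReal.ofReal_toReal_le

lemma lipschitzWith_etaComp (hA : MeasurableSet A) : LipschitzWith 1 (etaComp A) := by
  refine LipschitzWith.of_edist_le fun s t => (edist_etaComp_le hA s t).trans ?_
  rw [edist_dist, Real.dist_eq, abs_sub_comm, ← Real.volume_uIoc]
  exact measure_mono Set.inter_subset_left

lemma edist_etaComp_le_volume (hA : MeasurableSet A) (s t : ℝ) :
    edist (etaComp A s) (etaComp A t) ≤ volume A :=
  (edist_etaComp_le hA s t).trans (measure_mono Set.inter_subset_right)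

end Compression

lemma IntervalFamily.measurableSet {N : ℕ} {a b : Fin N → ℝ} {A : Set ℝ}
    (h : IntervalFamily N a b A) : MeasurableSet A :=
  h.1 ▸ MeasurableSet.iUnion fun _ => measurableSet_Ioo

lemma IntervalFamily.volume_le_ofReal {N : ℕ} {a b : Fin N → ℝ} {A : Set ℝ}
    (h : IntervalFamily N a b A) {c : ℝ} (hc : ∑ i, (b i - a i) ≤ c) :
    volume A ≤ ENNReal.ofReal c := by
  refine le_trans ?_ (ENNReal.ofReal_le_ofReal hc)
  rw [h.1, ENNReal.ofReal_sum_of_nonneg fun i _ => (sub_pos.2 (h.2.1 i)).le]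
  simpa only [Real.volume_Ioo] using measure_iUnion_fintype_le volume fun i => Ioo (a i) (b i)

section JumpMax

variable {X : Type*} [PseudoMetricSpace X]

def jumpMax (m : ℕ) (K : Set X) (u : X → ℝ) (x : X) : ℝ≥0∞ :=
  ⨆ (y ∈ K) (z ∈ K) (_ : u y ≠ u z), (edist x y ^ (m : ℝ) + edist x z ^ (m : ℝ))⁻¹

lemma lowerSemicontinuous_jumpMax (m : ℕ) (K : Set X) (u : X → ℝ) :
    LowerSemicontinuous (jumpMax m K u) :=
  lowerSemicontinuous_iSup fun _ => lowerSemicontinuous_iSup fun _ =>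
    lowerSemicontinuous_iSup fun _ => lowerSemicontinuous_iSup fun _ =>
    lowerSemicontinuous_iSup fun _ => Continuous.lowerSemicontinuous (by fun_prop)

lemma jumpMax_le_of_subsingleton {m : ℕ} {K : Set X} {u : X → ℝ} {x : X} {r : ℝ}
    (h : (u '' (K ∩ ball x r)).Subsingleton) :
    jumpMax m K u x ≤ (ENNReal.ofReal r ^ (m : ℝ))⁻¹ := by
  refine iSup₂_le fun y hy => iSup₂_le fun z hz => iSup_le fun huyz => ENNReal.inv_le_inv.2 ?_
  have hfar : ∀ w, w ∉ ball x r → ENNReal.ofReal r ^ (m : ℝ) ≤ edist x w ^ (m : ℝ) := by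
    intro w hw
    rw [mem_ball, not_lt, dist_comm] at hw
    rw [edist_dist]
    exact ENNReal.rpow_le_rpow (ENNReal.ofReal_le_ofReal hw) (Nat.cast_nonneg m)
  by_cases hyr : y ∈ ball x r
  · have hzr : z ∉ ball x r := fun hzr => huyz (h ⟨y, ⟨hy, hyr⟩, rfl⟩ ⟨z, ⟨hz, hzr⟩, rfl⟩)
    exact (hfar z hzr).trans le_add_self
  · exact (hfar y hyr).trans le_self_add

end JumpMax

section CompressedJets
variable {n m : ℕ} {K : Set (Euc n)} {f : (Fin n → ℕ) → Euc n → ℝ}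

lemma shvMax_scalarJet_etaComp_le_shvMax (hf : IsFlatOn (m - 1) K f) {A : Set ℝ}
    (hA : MeasurableSet A) (x : Euc n) :
    shvMax m K (scalarJet (etaComp A ∘ f 0)) x ≤ shvMax m K f x := by
  refine (shvMax_le_iff_of_isFlatOn (isFlatOn_scalarJet _ K _)).2 fun y hy z hz hyz => ?_
  refine le_trans ?_ ((shvMax_le_iff_of_isFlatOn hf).1 le_rfl y hy z hz hyz)
  rw [scalarJet_zero]
  gcongr
  simpa using (lipschitzWith_etaComp hA).edist_le_mul (f 0 y) (f 0 z)

lemma shvMax_scalarJet_etaComp_le_volume_mul (u : Euc n → ℝ) {A : Set ℝ}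
    (hA : MeasurableSet A) (x : Euc n) :
    shvMax m K (scalarJet (etaComp A ∘ u)) x ≤ volume A * jumpMax m K u x := by
  refine (shvMax_le_iff_of_isFlatOn (isFlatOn_scalarJet _ K _)).2 fun y hy z hz hyz => ?_
  rcases eq_or_ne (u y) (u z) with huyz | huyz
  · simp [huyz]
  rw [scalarJet_zero, div_eq_mul_inv]
  exact mul_le_mul' (edist_etaComp_le_volume hA _ _)
    (le_iSup₂_of_le y hy (le_iSup₂_of_le z hz (le_iSup_of_le huyz le_rfl)))

lemma shvMax_scalarJet_etaComp_le_min (hf : IsFlatOn (m - 1) K f) {A : Set ℝ}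
    (hA : MeasurableSet A) {c : ℝ≥0∞} (hAc : volume A ≤ c) (x : Euc n) :
    shvMax m K (scalarJet (etaComp A ∘ f 0)) x ≤ min (shvMax m K f x) (c * jumpMax m K (f 0) x) :=
  le_min (shvMax_scalarJet_etaComp_le_shvMax hf hA x)
    ((shvMax_scalarJet_etaComp_le_volume_mul (f 0) hA x).trans (mul_le_mul_left hAc _))

end CompressedJets

lemma exists_mem_le_lintegral_div {α : Type*} [MeasurableSpace α] {μ : Measure α} {s : Set α}
    {g : α → ℝ≥0∞} (hg : AEMeasurable g (μ.restrict s)) (h0 : μ s ≠ 0) (htop : μ s ≠ ⊤) :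
    ∃ x ∈ s, g x ≤ (∫⁻ x, g x ∂μ) / μ s := by
  obtain ⟨x, hx, hgx⟩ := exists_le_setLAverage h0 htop hg
  rw [setLAverage_eq] at hgx
  exact ⟨x, hx, hgx.trans (ENNReal.div_le_div_right (setLIntegral_le_lintegral s g) _)⟩

lemma rpow_div_volume_ball_mul_rpow {n : ℕ} (I : ℝ≥0∞) {p : ℝ} (hp : 0 < p) (y : Euc n)
    {r : ℝ} (hr : 0 < r) (c : ℝ≥0∞) (m : ℝ) :
    (I / volume (ball y r)) ^ (1 / p) * (c * ENNReal.ofReal r ^ m) =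
      (I / volume (ball (0 : Euc n) 1)) ^ (1 / p) * c * ENNReal.ofReal r ^ (m - n / p) := by
  set ρ := ENNReal.ofReal r
  have hρ : ρ ≠ 0 := (ENNReal.ofReal_pos.2 hr).ne'
  have hball : I / volume (ball y r) = (ρ ^ (n : ℝ))⁻¹ * (I / volume (ball (0 : Euc n) 1)) := by
    rw [Measure.addHaar_ball_of_pos _ _ hr, finrank_euclideanSpace_fin, ENNReal.ofReal_pow hr.le,
      div_eq_mul_inv, ENNReal.mul_inv (Or.inr measure_ball_lt_top.ne) (Or.inl (by simp)),
      div_eq_mul_inv, ENNReal.rpow_natCast]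
    ring
  rw [hball, ENNReal.mul_rpow_of_nonneg _ _ (by positivity), ENNReal.inv_rpow, ← ENNReal.rpow_mul,
    ENNReal.rpow_sub _ _ hρ ENNReal.ofReal_ne_top, mul_one_div, div_eq_mul_inv _ (ρ ^ _)]
  ring

theorem holderOnWith_of_isFlatOn {n m : ℕ} {p : ℝ} (hp : 0 < p) (hpm : n / p ≤ m)
    {K : Set (Euc n)} {f : (Fin n → ℕ) → Euc n → ℝ} (hf : IsFlatOn (m - 1) K f)
    (hI : ∫⁻ x, shvMax m K f x ^ p ≠ ⊤) :
    ∃ C, HolderOnWith C (m - n / p).toNNReal (f 0) K := by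
  set V := volume (ball (0 : Euc n) 1)
  have hV : V ≠ 0 := (measure_ball_pos volume 0 one_pos).ne'
  refine ⟨((∫⁻ x, shvMax m K f x ^ p) / V) ^ (1 / p) * (1 + 2 ^ (m : ℝ)) |>.toNNReal,
    fun y hy z hz => ?_⟩
  rcases eq_or_ne y z with rfl | hyz
  · simp
  have hr : 0 < dist y z := dist_pos.2 hyz
  obtain ⟨x, hxy, hx⟩ := exists_mem_le_lintegral_div
    ((lowerSemicontinuous_shvMax m K f).measurable.pow_const p).aemeasurable
    (measure_ball_pos volume y hr).ne' measure_ball_lt_top.ne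
  rw [mem_ball] at hxy
  have hMx : shvMax m K f x ≤
      ((∫⁻ x, shvMax m K f x ^ p) / volume (ball y (dist y z))) ^ (1 / p) := by
    have := ENNReal.rpow_le_rpow hx (one_div_nonneg.2 hp.le)
    rwa [← ENNReal.rpow_mul, mul_one_div_cancel hp.ne', ENNReal.rpow_one] at this
  have hden : edist x y ^ (m : ℝ) + edist x z ^ (m : ℝ) ≤
      (1 + 2 ^ (m : ℝ)) * ENNReal.ofReal (dist y z) ^ (m : ℝ) := by
    have hxz : dist x z ≤ 2 * dist y z := by linarith [dist_triangle x y z]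
    have htwo : 2 * ENNReal.ofReal (dist y z) = ENNReal.ofReal (2 * dist y z) := by
      rw [ENNReal.ofReal_mul zero_le_two, ENNReal.ofReal_ofNat]
    rw [add_mul, one_mul, ← ENNReal.mul_rpow_of_nonneg _ _ (Nat.cast_nonneg m), htwo, edist_dist,
      edist_dist]
    gcongr
  have hfin : ((∫⁻ x, shvMax m K f x ^ p) / V) ^ (1 / p) * (1 + 2 ^ (m : ℝ)) ≠ ⊤ :=
    ENNReal.mul_ne_top (ENNReal.rpow_ne_top_of_nonneg (by positivity) (ENNReal.div_ne_top hI hV))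
      (by simp)
  calc edist (f 0 y) (f 0 z)
      ≤ shvMax m K f x * (edist x y ^ (m : ℝ) + edist x z ^ (m : ℝ)) :=
        edist_le_shvMax_mul hf hy hz x
    _ ≤ _ := mul_le_mul' hMx hden
    _ = _ := rpow_div_volume_ball_mul_rpow _ hp y hr _ _
    _ = _ := by
        rw [ENNReal.coe_toNNReal hfin, Real.coe_toNNReal _ (sub_nonneg.2 hpm), edist_dist]

lemma continuousOn_of_isFlatOn {n m : ℕ} {p : ℝ} (hp : 0 < p) (hpm : n / p < m)
    {K : Set (Euc n)} {f : (Fin n → ℕ) → Euc n → ℝ} (hf : IsFlatOn (m - 1) K f)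
    (hI : ∫⁻ x, shvMax m K f x ^ p ≠ ⊤) : ContinuousOn (f 0) K :=
  have ⟨_, hC⟩ := holderOnWith_of_isFlatOn hp hpm.le hf hI
  hC.continuousOn (Real.toNNReal_pos.2 (sub_pos.2 hpm))

lemma _root_.IsPreconnected.subsingleton_of_volume_eq_zero {s : Set ℝ} (hs : IsPreconnected s)
    (h0 : volume s = 0) : s.Subsingleton := by
  by_contra hns
  obtain ⟨a, ha, b, hb, hab⟩ := (Set.not_subsingleton_iff.1 hns).exists_lt
  have hIcc := measure_mono_null (hs.ordConnected.out ha hb) h0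
  rw [Real.volume_Icc, ENNReal.ofReal_eq_zero] at hIcc
  linarith

lemma exists_ball_subset_connectedComponentIn {K : Set E2} {x : E2} (hx : x ∈ K)
    (hxS : x ∉ singSet K) : ∃ r > 0, K ∩ ball x r ⊆ connectedComponentIn K x := by
  by_contra! h
  have hcl : x ∈ closure (K \ connectedComponentIn K x) := by
    refine Metric.mem_closure_iff.2 fun r hr => ?_
    obtain ⟨y, ⟨hyK, hyr⟩, hyC⟩ := Set.not_subset.1 (h r hr)
    exact ⟨y, ⟨hyK, hyC⟩, by rwa [dist_comm, ← mem_ball]⟩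
  obtain ⟨y, hy, hlim⟩ := mem_closure_iff_seq_limit.1 hcl
  exact hxS ⟨hx, y, fun k => (hy k).1, hlim,
    fun k heq => (hy k).2 (heq ▸ mem_connectedComponentIn (hy k).1)⟩

lemma exists_subsingleton_image_ball_of_notMem_singSet {K : Set E2} (hK : IsClosed K)
    {u : E2 → ℝ} (hu : ContinuousOn u K) (h0 : volume (u '' K) = 0) {x : E2}
    (hxS : x ∉ singSet K) : ∃ r > 0, (u '' (K ∩ ball x r)).Subsingleton := by
  by_cases hx : x ∈ K
  · obtain ⟨r, hr, hsub⟩ := exists_ball_subset_connectedComponentIn hx hxS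
    have hC := connectedComponentIn_subset K x
    refine ⟨r, hr, Set.Subsingleton.anti ?_ (image_mono hsub)⟩
    exact (isPreconnected_connectedComponentIn.image u (hu.mono hC)).subsingleton_of_volume_eq_zero
      (measure_mono_null (image_mono hC) h0)
  · obtain ⟨r, hr, hball⟩ := Metric.isOpen_iff.1 hK.isOpen_compl x hx
    refine ⟨r, hr, ?_⟩
    rw [eq_empty_of_forall_notMem fun y (hy : y ∈ K ∩ ball x r) => hball hy.2 hy.1, image_empty]
    exact subsingleton_empty

lemma ae_jumpMax_ne_top {K : Set E2} (hK : IsClosed K) (hS : volume (singSet K) = 0)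
    {u : E2 → ℝ} (hu : ContinuousOn u K) (h0 : volume (u '' K) = 0) (m : ℕ) :
    ∀ᵐ x, jumpMax m K u x ≠ ⊤ := by
  refine (measure_eq_zero_iff_ae_notMem.1 hS).mono fun x hxS => ?_
  obtain ⟨r, hr, hsub⟩ := exists_subsingleton_image_ball_of_notMem_singSet hK hu h0 hxS
  refine ((jumpMax_le_of_subsingleton hsub).trans_lt ?_).ne
  exact ENNReal.inv_lt_top.2 (ENNReal.rpow_pos (ENNReal.ofReal_pos.2 hr) ENNReal.ofReal_ne_top)

section LpNorm
variable {n : ℕ} {p : ℝ}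

lemma lpNormE_mono (hp : 0 ≤ p) {g h : Euc n → ℝ≥0∞} (hgh : ∀ x, g x ≤ h x) :
    lpNormE g p ≤ lpNormE h p :=
  ENNReal.rpow_le_rpow (lintegral_mono fun x => ENNReal.rpow_le_rpow (hgh x) hp) (by positivity)

lemma lintegral_rpow_ne_top_of_lpNormE_lt_top (hp : 0 < p) {g : Euc n → ℝ≥0∞}
    (h : lpNormE g p < ⊤) : ∫⁻ x, g x ^ p ≠ ⊤ :=
  ((ENNReal.rpow_lt_top_iff_of_pos (one_div_pos.2 hp)).1 h).ne


lemma tendsto_lpNormE_min_ofReal_mul (hp : 0 < p) {g G : Euc n → ℝ≥0∞}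
    (hg : Measurable g) (hG : Measurable G) (hgp : ∫⁻ x, g x ^ p ≠ ⊤) (hGae : ∀ᵐ x, G x ≠ ⊤) :
    Tendsto (fun ε : ℝ => lpNormE (fun x => min (g x) (ENNReal.ofReal ε * G x)) p) (𝓝 0)
      (𝓝 0) := by
  have hint : Tendsto (fun ε : ℝ => ∫⁻ x, min (g x) (ENNReal.ofReal ε * G x) ^ p) (𝓝 0)
      (𝓝 (∫⁻ _ : Euc n, 0)) := by
    refine tendsto_lintegral_filter_of_dominated_convergence (fun x => g x ^ p)
      (Eventually.of_forall fun ε => by fun_prop)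
      (Eventually.of_forall fun ε => Eventually.of_forall fun x =>
        ENNReal.rpow_le_rpow (min_le_left _ _) hp.le) hgp (hGae.mono fun x hx => ?_)
    have hε : Tendsto (fun ε : ℝ => ENNReal.ofReal ε * G x) (𝓝 0) (𝓝 0) := by
      simpa using ENNReal.Tendsto.mul_const (ENNReal.tendsto_ofReal (tendsto_id (x := 𝓝 0)))
        (Or.inr hx)
    simpa [ENNReal.zero_rpow_of_pos hp] using
      (tendsto_const_nhds (x := g x) |>.min hε).ennrpow_const p
  simpa [lpNormE, ENNReal.zero_rpow_of_pos (inv_pos.2 hp)] using hint.ennrpow_const (1 / p)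

end LpNorm

lemma exists_tendsto_zero_and_eq_of_le_ofReal {c : ℝ≥0∞} (hc : c ≠ 0) (L : ℝ) :
    ∃ δ : ℝ → ℝ, Tendsto δ (𝓝[>] 0) (𝓝 0) ∧ ∀ ε, c ≤ ENNReal.ofReal ε → δ ε = L := by
  have hsmall : ∀ᶠ ε in 𝓝[>] (0 : ℝ), ENNReal.ofReal ε < c :=
    (ENNReal.continuous_ofReal.tendsto' 0 0 ENNReal.ofReal_zero).eventually
      (gt_mem_nhds (pos_iff_ne_zero.2 hc)) |>.filter_mono nhdsWithin_le_nhds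
  exact ⟨fun ε => if ENNReal.ofReal ε < c then 0 else L,
    tendsto_const_nhds.congr' (hsmall.mono fun ε h => (if_pos h).symm), fun ε h => if_neg h.not_gt⟩

/-- **Monotone compression for Sobolev spaces, `p > 2`** (Proposition 5.5). Let `K ⊂ ℝ²`
be compact with `|S(K)| = 0`, and let `f` be a jet of order `m-1` on `K` with
`f^{(j)} = 0` for `1 ≤ |j| ≤ m-1` and `‖M^{(m)} f‖_{L^p} < ∞`. Then the compressed jets
`f_ε = {η_ε ∘ f^{(0)}, 0, …, 0}`, built from any finite family of disjoint open intervals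
covering `f^{(0)}(K)` with total length `< ε`, satisfy `‖M^{(m)} f_ε‖_{L^p} ≤ δ(ε)` with
`δ(ε) → 0` as `ε → 0⁺`. -/
theorem monotone_compression_sobolev
    (m : ℕ) (hm : 2 ≤ m) (p : ℝ) (hp : 2 < p)
    (K : Set E2) (hK : IsCompact K) (hS : volume (singSet K) = 0)
    (f : (Fin 2 → ℕ) → E2 → ℝ)
    (hf : ∀ j : Fin 2 → ℕ, 1 ≤ (∑ i, j i) → (∑ i, j i) ≤ m - 1 → ∀ x ∈ K, f j x = 0)
    (hMf : lpNormE (shvMax m K f) p < ⊤) :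
    ∃ δ : ℝ → ℝ, Tendsto δ (𝓝[>] (0 : ℝ)) (𝓝 0) ∧
      ∀ ε : ℝ, 0 < ε → ∀ (N : ℕ) (a b : Fin N → ℝ) (A : Set ℝ),
        IntervalFamily N a b A → (f 0) '' K ⊆ A → (∑ i, (b i - a i)) < ε →
        lpNormE (shvMax m K (fun j x => if j = 0 then etaComp A (f 0 x) else 0)) p ≤
          ENNReal.ofReal (δ ε) := by
  have hp0 : 0 < p := by linarith
  have hI := lintegral_rpow_ne_top_of_lpNormE_lt_top hp0 hMf
  have hcont : ContinuousOn (f 0) K := continuousOn_of_isFlatOn hp0 (by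
    rw [Nat.cast_ofNat, div_lt_iff₀ hp0]
    nlinarith [(Nat.ofNat_le_cast.2 hm : (2 : ℝ) ≤ m)]) hf hI
  by_cases hμ : volume (f 0 '' K) = 0
  · set Φ : ℝ → ℝ≥0∞ := fun ε =>
      lpNormE (fun x => min (shvMax m K f x) (ENNReal.ofReal ε * jumpMax m K (f 0) x)) p
    refine ⟨fun ε => (Φ ε).toReal, ?_, fun ε _ N a b A hA _ hsum => ?_⟩
    · have hΦ := tendsto_lpNormE_min_ofReal_mul hp0 (lowerSemicontinuous_shvMax m K f).measurable
        (lowerSemicontinuous_jumpMax m K (f 0)).measurable hI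
        (ae_jumpMax_ne_top hK.isClosed hS hcont hμ m)
      exact ((ENNReal.tendsto_toReal ENNReal.zero_ne_top).comp hΦ).mono_left nhdsWithin_le_nhds
    · have hΦ : Φ ε ≠ ⊤ := ((lpNormE_mono hp0.le fun x => min_le_left _ _).trans_lt hMf).ne
      rw [ENNReal.ofReal_toReal hΦ]
      exact lpNormE_mono hp0.le (shvMax_scalarJet_etaComp_le_min hf hA.measurableSet
        (hA.volume_le_ofReal hsum.le))
  · obtain ⟨δ, hδ, hδL⟩ :=
      exists_tendsto_zero_and_eq_of_le_ofReal hμ (lpNormE (shvMax m K f) p).toReal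
    refine ⟨δ, hδ, fun ε _ N a b A hA hcov hsum => ?_⟩
    rw [hδL ε ((measure_mono hcov).trans (hA.volume_le_ofReal hsum.le)),
      ENNReal.ofReal_toReal hMf.ne]
    exact lpNormE_mono hp0.le (shvMax_scalarJet_etaComp_le_shvMax hf hA.measurableSet)

end DFA
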